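/- arXiv:2503.01540 — 3 statements merged into one kernel-verified Lean document; each statement's English description precedes it below -/
import Mathlib

section
/- Let C be a quadratic Casimir function, i.e. C(y) = (1/2) yᵀ D y with D symmetric, satisfying ∇C(y)ᵀ B(y) = 0 for all y (where B(y) is skew-symmetric). Suppose z₁, ẑ ∈ ℝ^d satisfy z₁ = ẑ + B((ẑ+z₁)/2) w for some w ∈ ℝ^d. Then C(z₁) = C(ẑ). -/
open Matrix

theorem stmt9 {d : ℕ} (D : Matrix (Fin d) (Fin d) ℝ) (hD : D.IsSymm)
    (B : (Fin d → ℝ) → Matrix (Fin d) (Fin d) ℝ)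
    (hBskew : ∀ y, (B y)ᵀ = -(B y))
    (hCas : ∀ y, Matrix.vecMul (D.mulVec y) (B y) = 0)
    (C : (Fin d → ℝ) → ℝ) (hC : ∀ y, C y = (1 / 2) * (y ⬝ᵥ D.mulVec y))
    (zhat z₁ w : Fin d → ℝ)
    (hstep : z₁ = zhat + (B ((1 / 2 : ℝ) • (zhat + z₁))).mulVec w) :
    C z₁ = C zhat := by
  set m := (1 / 2 : ℝ) • (zhat + z₁) with hm
  set u := (B m).mulVec w with hu
  have hz : z₁ = zhat + u := hstep
  have hm' : m = zhat + (1 / 2 : ℝ) • u := by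
    rw [hm, hz]; ext i; simp [Pi.smul_apply]; ring
  have hzero : D.mulVec m ⬝ᵥ u = 0 := by
    rw [dotProduct_mulVec, hCas, zero_dotProduct]
  have hsym : ∀ a b : Fin d → ℝ, a ⬝ᵥ D.mulVec b = b ⬝ᵥ D.mulVec a := by
    intro a b
    rw [dotProduct_mulVec, ← hD.eq, vecMul_transpose, dotProduct_comm, hD.eq]
  have key : u ⬝ᵥ D.mulVec zhat + (1 / 2 : ℝ) * (u ⬝ᵥ D.mulVec u) = 0 := by
    have := hzero
    rw [hm', mulVec_add, mulVec_smul, add_dotProduct, smul_dotProduct,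
      dotProduct_comm (D.mulVec zhat) u, dotProduct_comm (D.mulVec u) u] at this
    simpa using this
  have hb : zhat ⬝ᵥ D.mulVec u = u ⬝ᵥ D.mulVec zhat := hsym _ _
  rw [hC, hC, hz]
  rw [add_dotProduct, mulVec_add, dotProduct_add, dotProduct_add]
  rw [hb]
  linarith [key]
end

section
/- Consider one step of the conformal exponential integrator: ŷ = e^{−a} y, z = ŷ + B((ŷ+z)/2) w with any w ∈ ℝ^d, and y' = e^{−b} z, where a = ∫_{t_n}^{t_{n+1/2}} γ(s) ds and b = ∫_{t_{n+1/2}}^{t_{n+1}} γ(s) ds. If C(y) = (1/2) yᵀ D y is a quadratic Casimir (so ∇C(u)ᵀ B(u) = 0 for all u), then C(y') = exp(−2∫_{t_n}^{t_{n+1}} γ(s) ds) · C(y). -/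
open Matrix

theorem stmt11 {d : ℕ} (γ : ℝ → ℝ) (hγ : Continuous γ)
    (tn tn1 : ℝ) (ht : tn < tn1)
    (D : Matrix (Fin d) (Fin d) ℝ) (hD : D.IsSymm)
    (C : (Fin d → ℝ) → ℝ) (hC : ∀ u, C u = (1 / 2) * (u ⬝ᵥ D.mulVec u))
    (B : (Fin d → ℝ) → Matrix (Fin d) (Fin d) ℝ)
    (hBskew : ∀ u, (B u)ᵀ = -(B u))
    (hCas : ∀ u, Matrix.vecMul (D.mulVec u) (B u) = 0)
    (y yhat z y' w : Fin d → ℝ)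
    (hyhat : yhat = Real.exp (-(∫ s in tn..((tn + tn1) / 2), γ s)) • y)
    (hz : z = yhat + (B ((1 / 2 : ℝ) • (yhat + z))).mulVec w)
    (hy' : y' = Real.exp (-(∫ s in ((tn + tn1) / 2)..tn1, γ s)) • z) :
    C y' = Real.exp (-2 * ∫ s in tn..tn1, γ s) * C y := by
  set a := ∫ s in tn..((tn + tn1) / 2), γ s with ha
  set b := ∫ s in ((tn + tn1) / 2)..tn1, γ s with hb
  -- symmetric pairing lemma
  have hsym : ∀ u v : Fin d → ℝ, u ⬝ᵥ D.mulVec v = D.mulVec u ⬝ᵥ v := by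
    intro u v
    rw [dotProduct_mulVec, ← vecMul_transpose, hD.eq]
  -- C scales quadratically
  have hscale : ∀ (c : ℝ) (u : Fin d → ℝ), C (c • u) = c ^ 2 * C u := by
    intro c u
    simp only [hC, mulVec_smul, smul_dotProduct, dotProduct_smul, smul_eq_mul]
    ring
  -- C z = C yhat
  set m : Fin d → ℝ := (1 / 2 : ℝ) • (yhat + z) with hm
  have hzy : z - yhat = (B m).mulVec w := by rw [hz]; abel
  have hpair : (z + yhat) ⬝ᵥ D.mulVec (z - yhat) = 0 := by
    have h2m : z + yhat = (2 : ℝ) • m := by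
      rw [hm]; rw [smul_smul]; norm_num; abel
    rw [hzy, h2m, smul_dotProduct, hsym, dotProduct_mulVec, hCas, zero_dotProduct,
      smul_eq_mul, mul_zero]
  have hCz : C z = C yhat := by
    have expand : z ⬝ᵥ D.mulVec z - yhat ⬝ᵥ D.mulVec yhat
        = (z + yhat) ⬝ᵥ D.mulVec (z - yhat) := by
      have hcross : yhat ⬝ᵥ D.mulVec z = z ⬝ᵥ D.mulVec yhat := by
        rw [hsym, dotProduct_comm]
      simp only [mulVec_add, mulVec_sub, dotProduct_add, dotProduct_sub, add_dotProduct,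
        sub_dotProduct]
      rw [hcross]; ring
    rw [hpair] at expand
    rw [hC z, hC yhat]
    have : z ⬝ᵥ D.mulVec z = yhat ⬝ᵥ D.mulVec yhat := by linarith
    rw [this]
  -- integrals add
  have hadd : a + b = ∫ s in tn..tn1, γ s := by
    rw [ha, hb]
    exact intervalIntegral.integral_add_adjacent_intervals
      (hγ.intervalIntegrable _ _) (hγ.intervalIntegrable _ _)
  calc C y' = Real.exp (-b) ^ 2 * C z := by rw [hy', hscale]
    _ = Real.exp (-b) ^ 2 * (Real.exp (-a) ^ 2 * C y) := by rw [hCz, hyhat, hscale]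
    _ = Real.exp (-2 * (a + b)) * C y := by
        rw [← Real.exp_nat_mul, ← Real.exp_nat_mul, ← mul_assoc, ← Real.exp_add]
        ring_nf
    _ = Real.exp (-2 * ∫ s in tn..tn1, γ s) * C y := by rw [hadd]
end

section
/- Let H : ℝ^d → ℝ be C¹ and homogeneous of degree p > 0, B skew-symmetric valued, and consider one integrator step ŷ = e^{−a} y, z = ŷ + α B((ŷ+z)/2) ∇̄H(ŷ,z), y' = e^{−b} z with a + b = ∫_{t_n}^{t_{n+1}} γ(s) ds. Then H(y') = exp(−p ∫_{t_n}^{t_{n+1}} γ(s) ds) H(y). -/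
open Matrix

lemma skew_quad {d : ℕ} (M : Matrix (Fin d) (Fin d) ℝ) (hM : Mᵀ = -M) (v : Fin d → ℝ) :
    v ⬝ᵥ M *ᵥ v = 0 := by
  have h1 : v ⬝ᵥ M *ᵥ v = (Mᵀ *ᵥ v) ⬝ᵥ v := by
    rw [Matrix.dotProduct_mulVec, ← Matrix.vecMul_transpose, Matrix.transpose_transpose]
  have h2 : (Mᵀ *ᵥ v) ⬝ᵥ v = -(v ⬝ᵥ M *ᵥ v) := by
    rw [hM, Matrix.neg_mulVec, neg_dotProduct, dotProduct_comm]
  linarith [h1.trans h2]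

lemma euclid_inner_mulVec {d : ℕ} (g : EuclideanSpace ℝ (Fin d)) (M : Matrix (Fin d) (Fin d) ℝ)
    (hM : Mᵀ = -M) :
    (inner ℝ g ((EuclideanSpace.equiv (Fin d) ℝ).symm
      (M *ᵥ (EuclideanSpace.equiv (Fin d) ℝ) g)) : ℝ) = 0 := by
  have h : (inner ℝ g ((EuclideanSpace.equiv (Fin d) ℝ).symm
      (M *ᵥ (EuclideanSpace.equiv (Fin d) ℝ) g)) : ℝ)
      = ((EuclideanSpace.equiv (Fin d) ℝ) g) ⬝ᵥ M *ᵥ ((EuclideanSpace.equiv (Fin d) ℝ) g) := by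
    simp [PiLp.inner_apply, RCLike.inner_apply, dotProduct, Matrix.mulVec,
      mul_comm]
  rw [h, skew_quad M hM]

theorem stmt12 {d : ℕ} (p : ℝ) (hp : 0 < p)
    (H : EuclideanSpace ℝ (Fin d) → ℝ) (hH : ContDiff ℝ 1 H)
    (hhom : ∀ l : ℝ, 0 < l → ∀ u, H (l • u) = l ^ p * H u)
    (B : EuclideanSpace ℝ (Fin d) → Matrix (Fin d) (Fin d) ℝ)
    (hB : ∀ u, (B u)ᵀ = -(B u))
    (γ : ℝ → ℝ) (hγ : Continuous γ) (tn tn1 : ℝ) (ht : tn < tn1)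
    (α : ℝ) (y yhat z y' : EuclideanSpace ℝ (Fin d))
    (hyhat : yhat = Real.exp (-(∫ s in tn..((tn + tn1) / 2), γ s)) • y)
    (hz : z = yhat + α • (EuclideanSpace.equiv (Fin d) ℝ).symm
        ((B ((1 / 2 : ℝ) • (yhat + z))).mulVec
          ((EuclideanSpace.equiv (Fin d) ℝ)
            (∫ η in (0:ℝ)..1, gradient H ((1 - η) • yhat + η • z)))))
    (hy' : y' = Real.exp (-(∫ s in ((tn + tn1) / 2)..tn1, γ s)) • z) :
    H y' = Real.exp (-p * ∫ s in tn..tn1, γ s) * H y := by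
  set a := ∫ s in tn..((tn + tn1) / 2), γ s with ha
  set b := ∫ s in ((tn + tn1) / 2)..tn1, γ s with hb
  have hexp : ∀ (t : ℝ) (u : EuclideanSpace ℝ (Fin d)),
      H (Real.exp t • u) = Real.exp (p * t) * H u := by
    intro t u
    rw [hhom _ (Real.exp_pos t) u, mul_comm p t, Real.exp_mul]
  -- key conservation: H z = H yhat
  have hkey : H z = H yhat := by
    set v : EuclideanSpace ℝ (Fin d) := z - yhat with hv
    set g : EuclideanSpace ℝ (Fin d) :=
      ∫ η in (0:ℝ)..1, gradient H ((1 - η) • yhat + η • z) with hg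
    set c : ℝ → EuclideanSpace ℝ (Fin d) := fun η => yhat + η • v with hc
    have hcc : ∀ η : ℝ, (1 - η) • yhat + η • z = c η := by
      intro η
      simp only [hc, hv, smul_sub, sub_smul, one_smul]
      abel
    have hcont_grad : Continuous (gradient H) := by
      have : gradient H = fun x =>
          (InnerProductSpace.toDual ℝ (EuclideanSpace ℝ (Fin d))).symm (fderiv ℝ H x) := rfl
      rw [this]
      exact (InnerProductSpace.toDual ℝ _).symm.continuous.comp (hH.continuous_fderiv one_ne_zero)
    have hcontc : Continuous c := by fun_prop
    have hderiv : ∀ η : ℝ,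
        HasDerivAt (fun s => H (c s)) (inner ℝ (gradient H (c η)) v : ℝ) η := by
      intro η
      have h1 : HasDerivAt c v η := by
        exact (by simpa using ((hasDerivAt_id η).smul_const v).const_add yhat : HasDerivAt (fun x : ℝ => yhat + x • v) v η)
      have h2 : HasGradientAt H (gradient H (c η)) (c η) :=
        (hH.differentiable one_ne_zero (c η)).hasGradientAt
      have := h2.hasFDerivAt.comp_hasDerivAt η h1
      exact this
    have hint : IntervalIntegrable (fun η => (inner ℝ (gradient H (c η)) v : ℝ))
        MeasureTheory.volume 0 1 :=
      (Continuous.inner (hcont_grad.comp hcontc) continuous_const).intervalIntegrable 0 1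
    have hftc : (∫ η in (0:ℝ)..1, (inner ℝ (gradient H (c η)) v : ℝ)) = H (c 1) - H (c 0) :=
      intervalIntegral.integral_eq_sub_of_hasDerivAt (fun η _ => hderiv η) hint
    have hintg : IntervalIntegrable (fun η => gradient H (c η)) MeasureTheory.volume 0 1 :=
      (hcont_grad.comp hcontc).intervalIntegrable 0 1
    have hgc : g = ∫ η in (0:ℝ)..1, gradient H (c η) := by
      rw [hg]
      exact intervalIntegral.integral_congr fun η _ => by rw [hcc]
    have hswap : (∫ η in (0:ℝ)..1, (inner ℝ (gradient H (c η)) v : ℝ)) = inner ℝ g v := by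
      have e1 : (∫ η in (0:ℝ)..1, (inner ℝ (gradient H (c η)) v : ℝ))
          = ∫ η in (0:ℝ)..1, (innerSL ℝ v) (gradient H (c η)) := by
        refine intervalIntegral.integral_congr fun η _ => ?_
        simp only [innerSL_apply_apply]
        exact real_inner_comm _ _
      have e2 := (innerSL ℝ v).intervalIntegral_comp_comm hintg
      rw [e1, e2, ← hgc, innerSL_apply_apply, real_inner_comm]
    have hinner : (inner ℝ g v : ℝ) = 0 := by
      have hvv : v = α • (EuclideanSpace.equiv (Fin d) ℝ).symm
          ((B ((1 / 2 : ℝ) • (yhat + z))).mulVec ((EuclideanSpace.equiv (Fin d) ℝ) g)) := by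
        rw [hv]
        conv_lhs => rw [hz]
        exact add_sub_cancel_left _ _
      rw [hvv, real_inner_smul_right, euclid_inner_mulVec g _ (hB _), mul_zero]
    have hc0 : c 0 = yhat := by simp [hc]
    have hc1 : c 1 = z := by simp [hc, hv]
    have hfin := hftc.symm.trans hswap
    rw [hc0, hc1, hinner] at hfin
    linarith
  have hab : a + b = ∫ s in tn..tn1, γ s :=
    intervalIntegral.integral_add_adjacent_intervals
      (hγ.intervalIntegrable _ _) (hγ.intervalIntegrable _ _)
  rw [hy', hexp, hkey, hyhat, hexp, ← mul_assoc, ← Real.exp_add]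
  congr 2
  rw [← hab]; ring
end
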